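/- For real B₁, B₂ ≥ 1, the number of matrices in SL₂(𝔽_q[T]) whose first column has both entries of absolute value at most B₁ and whose second column has both entries of absolute value at most B₂ is O(B₁·B₂), with the implied constant depending only on q. -/

import Mathlib

open Polynomial Filter
open scoped Classical ENNReal

noncomputable section

variable (Fq : Type) [Field Fq] [Fintype Fq]

/-- The element `T` inside the Laurent-series field `𝔽_q((T⁻¹))`, which we realize
as the field of Hahn/Laurent series in the variable `T⁻¹`. -/
def Tel : LaurentSeries Fq := HahnSeries.single (-1 : ℤ) 1

/-- The inverse variable `T⁻¹` itself. -/
def TinvEl : LaurentSeries Fq := HahnSeries.single (1 : ℤ) 1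

/-- The embedding of the polynomial ring `𝔽_q[T]` into `𝔽_q((T⁻¹))`,
sending `T` to `Tel`. -/
def polyToL (P : Polynomial Fq) : LaurentSeries Fq :=
  Polynomial.eval₂ HahnSeries.C (Tel Fq) P

/-- The absolute value `|x| = q ^ (deg x)` on `𝔽_q((T⁻¹))`, with `|0| = 0`.
Here the degree of `x ≠ 0` is minus the order of `x` as a series in `T⁻¹`. -/
def labs (x : LaurentSeries Fq) : ℝ :=
  if x = 0 then 0 else (Fintype.card Fq : ℝ) ^ (-x.order)

/-- `‖x‖`: the distance from `x` to the nearest polynomial. -/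
def lnorm (x : LaurentSeries Fq) : ℝ :=
  ⨅ P : Polynomial Fq, labs Fq (x - polyToL Fq P)

/-- `x ∈ 𝔽_q(T)`, i.e. `x` is rational. -/
def IsRat (x : LaurentSeries Fq) : Prop :=
  ∃ P Q : Polynomial Fq, Q ≠ 0 ∧ polyToL Fq Q * x = polyToL Fq P


/-- `SL₂(𝔽_q[T])`. -/
abbrev SL2 := Matrix.SpecialLinearGroup (Fin 2) (Polynomial Fq)

/-- Maximum of the absolute values of the entries of a `2 × 2` matrix. -/
def matAbs (M : Matrix (Fin 2) (Fin 2) (LaurentSeries Fq)) : ℝ :=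
  max (max (labs Fq (M 0 0)) (labs Fq (M 0 1))) (max (labs Fq (M 1 0)) (labs Fq (M 1 1)))

/-- The size `|γ|` of a matrix `γ ∈ SL₂(𝔽_q[T])`. -/
def gabs (γ : SL2 Fq) : ℝ :=
  matAbs Fq (((γ : Matrix (Fin 2) (Fin 2) (Polynomial Fq))).map (polyToL Fq))

/-- Maximum of the absolute values of the coordinates of a vector. -/
def vabs (v : Fin 2 → LaurentSeries Fq) : ℝ :=
  max (labs Fq (v 0)) (labs Fq (v 1))

/-- The standard linear action of `SL₂(𝔽_q[T])` on `𝔽_q((T⁻¹))²`. -/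
def act (γ : SL2 Fq) (v : Fin 2 → LaurentSeries Fq) : Fin 2 → LaurentSeries Fq :=
  (((γ : Matrix (Fin 2) (Fin 2) (Polynomial Fq))).map (polyToL Fq)).mulVec v

/-- The asymptotic Diophantine exponent `μ(x, y)` (as an element of `ℝ≥0∞`). -/
def muExp (x y : Fin 2 → LaurentSeries Fq) : ℝ≥0∞ :=
  ⨆ m ∈ {m : ℝ |
      {γ : SL2 Fq | vabs Fq (act Fq γ x - y) ≤ gabs Fq γ ^ (-m)}.Infinite},
    ENNReal.ofReal m

/-- The uniform Diophantine exponent `μ̂(x, y)` (as an element of `ℝ≥0∞`). -/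
def muHatExp (x y : Fin 2 → LaurentSeries Fq) : ℝ≥0∞ :=
  ⨆ m ∈ {m : ℝ | ∀ᶠ H : ℝ in atTop, ∃ γ : SL2 Fq,
      gabs Fq γ ≤ H ∧ vabs Fq (act Fq γ x - y) ≤ H ^ (-m)},
    ENNReal.ofReal m

/-- The irrationality exponent `ω(ξ)` (as an element of `ℝ≥0∞`). -/
def omegaExp (ξ : LaurentSeries Fq) : ℝ≥0∞ :=
  ⨆ w ∈ {w : ℝ |
      {Q : Polynomial Fq | Q ≠ 0 ∧
        lnorm Fq (polyToL Fq Q * ξ) ≤ labs Fq (polyToL Fq Q) ^ (-w)}.Infinite},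
    ENNReal.ofReal w


/-- The set of matrices in `SL₂(𝔽_q[T])` whose first column is bounded by `B1`
and whose second column is bounded by `B2`. -/
def bddSL2 (B1 B2 : ℝ) : Set (SL2 Fq) :=
  {γ : SL2 Fq |
    (labs Fq (polyToL Fq ((γ : Matrix (Fin 2) (Fin 2) (Polynomial Fq)) 0 0)) ≤ B1 ∧
      labs Fq (polyToL Fq ((γ : Matrix (Fin 2) (Fin 2) (Polynomial Fq)) 1 0)) ≤ B1) ∧
    (labs Fq (polyToL Fq ((γ : Matrix (Fin 2) (Fin 2) (Polynomial Fq)) 0 1)) ≤ B2 ∧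
      labs Fq (polyToL Fq ((γ : Matrix (Fin 2) (Fin 2) (Polynomial Fq)) 1 1)) ≤ B2)}

/-!
An absolute value bound `|f| ≤ B` is a degree bound `deg f ≤ log_q B`. Two matrices of `SL₂` with
the same first column `(a, c)` differ by a unipotent factor `[[1, t], [0, 1]]` on the right, so
their second columns differ by `t • (a, c)`; when both second columns have degree at most `n₂`,
this forces `deg t ≤ n₂ - max (deg a) (deg c)`. A first column of degree `k` thus carries at most
`q ^ (n₂ - k + 1)` matrices, and there are at most `q ^ (2k + 2)` such columns, so for `n₁ ≤ n₂`
the count is `O(q ^ (n₁ + n₂))`. Right multiplication by `S = [[0, -1], [1, 0]]` swaps the roles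
of the two columns and handles `n₁ > n₂`.
-/

open scoped MatrixGroups Finset

section

variable {R : Type*} [CommRing R] [IsDomain R]

theorem Polynomial.natDegree_add_max_le_of_natDegree_mul_le {t a c : R[X]} {n : ℕ} (ht : t ≠ 0)
    (hac : a ≠ 0 ∨ c ≠ 0) (ha : (t * a).natDegree ≤ n) (hc : (t * c).natDegree ≤ n) :
    t.natDegree + max a.natDegree c.natDegree ≤ n := by
  have key : ∀ x : R[X], x ≠ 0 → (t * x).natDegree ≤ n → t.natDegree + x.natDegree ≤ n :=
    fun x hx h => by rwa [natDegree_mul ht hx] at h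
  rcases eq_or_ne a 0 with rfl | ha0
  · simpa using key c (hac.resolve_left (not_not.mpr rfl)) hc
  rcases eq_or_ne c 0 with rfl | hc0
  · simpa using key a ha0 ha
  rw [← max_add_add_left]
  exact max_le (key a ha0 ha) (key c hc0 hc)

end

section

variable {K : Type} [Field K]

theorem coeff_polyToL_neg_natCast (P : K[X]) (m : ℕ) :
    (polyToL K P).coeff (-m) = P.coeff m := by
  induction P using Polynomial.induction_on' with
  | add p p' hp hp' =>
    rw [polyToL, eval₂_add, HahnSeries.coeff_add, ← polyToL, ← polyToL, hp, hp', coeff_add]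
  | monomial n a =>
    simp [polyToL, Tel, HahnSeries.single_pow, HahnSeries.coeff_single, coeff_monomial, eq_comm]

theorem order_polyToL_le {P : K[X]} (hP : P ≠ 0) : (polyToL K P).order ≤ -P.natDegree :=
  HahnSeries.order_le_of_coeff_ne_zero <| by
    rwa [coeff_polyToL_neg_natCast, ← leadingCoeff, leadingCoeff_ne_zero]

theorem polyToL_ne_zero {P : K[X]} (hP : P ≠ 0) : polyToL K P ≠ 0 := fun h =>
  leadingCoeff_ne_zero.mpr hP <| by simpa [h] using (coeff_polyToL_neg_natCast P P.natDegree).symm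

end

section

variable {R : Type*} [CommRing R]

theorem SL2_det_eq_one (γ : SL(2, R)) : γ 0 0 * γ 1 1 - γ 0 1 * γ 1 0 = 1 := by
  simpa only [Matrix.det_fin_two] using γ.2

theorem SL2_col_one_sub_eq_mul_col_zero {γ δ : SL(2, R)} (h0 : γ 0 0 = δ 0 0)
    (h1 : γ 1 0 = δ 1 0) :
    γ 0 1 - δ 0 1 = (γ 0 1 * δ 1 1 - γ 1 1 * δ 0 1) * δ 0 0 ∧
      γ 1 1 - δ 1 1 = (γ 0 1 * δ 1 1 - γ 1 1 * δ 0 1) * δ 1 0 := by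
  -- the common factor is the `(0, 1)` entry of `δ⁻¹ * γ = [[1, t], [0, 1]]`
  have hγ := SL2_det_eq_one γ
  have hδ := SL2_det_eq_one δ
  rw [h0, h1] at hγ
  constructor
  · linear_combination δ 0 1 * hγ - γ 0 1 * hδ
  · linear_combination δ 1 1 * hγ - γ 1 1 * hδ

theorem SL2_mul_S_apply (γ : SL(2, R)) :
    (γ * ModularGroup.S.map (Int.castRingHom R)) 0 0 = γ 0 1 ∧
    (γ * ModularGroup.S.map (Int.castRingHom R)) 1 0 = γ 1 1 ∧
    (γ * ModularGroup.S.map (Int.castRingHom R)) 0 1 = -γ 0 0 ∧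
    (γ * ModularGroup.S.map (Int.castRingHom R)) 1 1 = -γ 1 0 := by
  simp [Matrix.mul_apply, Fin.sum_univ_two]

variable (R) in
def natDegreeBddSL2 (n1 n2 : ℕ) : Set SL(2, R[X]) :=
  {γ | (γ 0 0).natDegree ≤ n1 ∧ (γ 1 0).natDegree ≤ n1 ∧
    (γ 0 1).natDegree ≤ n2 ∧ (γ 1 1).natDegree ≤ n2}

theorem ncard_natDegreeBddSL2_comm (n1 n2 : ℕ) :
    (natDegreeBddSL2 R n1 n2).ncard = (natDegreeBddSL2 R n2 n1).ncard := by
  set S := ModularGroup.S.map (Int.castRingHom R[X])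
  have : natDegreeBddSL2 R n1 n2 = (· * S) ⁻¹' natDegreeBddSL2 R n2 n1 := by
    ext γ
    simp only [natDegreeBddSL2, Set.mem_preimage, Set.mem_ofPred_eq, SL2_mul_S_apply,
      natDegree_neg, S]
    tauto
  rw [this, Set.ncard_preimage_of_injective_subset_range (mul_left_injective S)
    fun γ _ => mul_right_surjective S γ]

end

section

variable (R : Type*) [CommRing R] [Fintype R]

def natDegreeLEFinset (n : ℕ) : Finset R[X] :=
  Finset.univ.map <|
    (degreeLTEquiv R (n + 1)).symm.toEquiv.toEmbedding.trans (Function.Embedding.subtype _)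

variable {R}

theorem mem_natDegreeLEFinset {n : ℕ} {p : R[X]} :
    p ∈ natDegreeLEFinset R n ↔ p.natDegree ≤ n := by
  rw [natDegreeLEFinset, Finset.mem_map, natDegree_le_iff_degree_le, ← mem_degreeLE,
    ← degreeLT_succ_eq_degreeLE]
  exact ⟨fun ⟨v, _, hv⟩ => hv ▸ ((degreeLTEquiv R (n + 1)).symm v).2,
    fun hp => ⟨degreeLTEquiv R (n + 1) ⟨p, hp⟩, Finset.mem_univ _, by simp⟩⟩

theorem card_natDegreeLEFinset (n : ℕ) :
    (natDegreeLEFinset R n).card = Fintype.card R ^ (n + 1) := by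
  simp [natDegreeLEFinset]

theorem natDegreeBddSL2_finite (n1 n2 : ℕ) : (natDegreeBddSL2 R n1 n2).Finite := by
  refine Set.Finite.of_injOn (f := fun γ : SL(2, R[X]) => (γ 0 0, γ 1 0, γ 0 1, γ 1 1))
    (t := ↑(natDegreeLEFinset R n1 ×ˢ natDegreeLEFinset R n1 ×ˢ
      natDegreeLEFinset R n2 ×ˢ natDegreeLEFinset R n2)) ?_ ?_ (Finset.finite_toSet _)
  · rintro γ ⟨ha, hc, hb, hd⟩
    simp [mem_natDegreeLEFinset, ha, hc, hb, hd]
  · intro γ _ γ' _ h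
    simp only [Prod.mk.injEq] at h
    exact Matrix.SpecialLinearGroup.ext _ _ <| by simp [Fin.forall_fin_two, h]

end

section

variable {Fq}

local notation "q" => Fintype.card Fq

theorem pow_natDegree_le_labs_polyToL {P : Fq[X]} (hP : P ≠ 0) :
    (q : ℝ) ^ P.natDegree ≤ labs Fq (polyToL Fq P) := by
  rw [labs, if_neg (polyToL_ne_zero hP), ← zpow_natCast]
  exact zpow_le_zpow_right₀ (mod_cast Fintype.card_pos) (by linarith [order_polyToL_le hP])

theorem natDegree_le_log_of_labs_polyToL_le {P : Fq[X]} {B : ℝ}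
    (h : labs Fq (polyToL Fq P) ≤ B) : P.natDegree ≤ Nat.log q ⌊B⌋₊ := by
  rcases eq_or_ne P 0 with rfl | hP
  · simp
  refine Nat.le_log_of_pow_le Fintype.one_lt_card (Nat.le_floor ?_)
  exact_mod_cast (pow_natDegree_le_labs_polyToL hP).trans h

theorem pow_log_floor_le {b : ℕ} {B : ℝ} (hB : 1 ≤ B) : ((b ^ Nat.log b ⌊B⌋₊ : ℕ) : ℝ) ≤ B :=
  calc ((b ^ Nat.log b ⌊B⌋₊ : ℕ) : ℝ) ≤ ⌊B⌋₊ :=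
        mod_cast Nat.pow_log_le_self b (Nat.floor_pos.mpr hB).ne'
    _ ≤ B := Nat.floor_le (by linarith)

theorem ncard_le_of_forall_col_zero_eq {s : Set (SL2 Fq)} {a c : Fq[X]} {n : ℕ}
    (hk : max a.natDegree c.natDegree ≤ n)
    (hs : ∀ γ ∈ s, γ 0 0 = a ∧ γ 1 0 = c ∧ (γ 0 1).natDegree ≤ n ∧ (γ 1 1).natDegree ≤ n) :
    s.ncard ≤ q ^ (n - max a.natDegree c.natDegree + 1) := by
  rcases s.eq_empty_or_nonempty with rfl | ⟨δ, hδ⟩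
  · simp
  obtain ⟨hδa, hδc, hδb, hδd⟩ := hs δ hδ
  have hac : a ≠ 0 ∨ c ≠ 0 := by
    by_contra! h
    simpa [hδa, hδc, h] using SL2_det_eq_one δ
  rw [← card_natDegreeLEFinset, ← Set.ncard_coe_finset]
  refine Set.ncard_le_ncard_of_injOn (fun γ => γ 0 1 * δ 1 1 - γ 1 1 * δ 0 1) ?_ ?_
    (Finset.finite_toSet _)
  · intro γ hγ
    obtain ⟨hγa, hγc, hγb, hγd⟩ := hs γ hγ
    obtain ⟨hb, hd⟩ := SL2_col_one_sub_eq_mul_col_zero (hγa.trans hδa.symm) (hγc.trans hδc.symm)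
    rw [Finset.mem_coe, mem_natDegreeLEFinset]
    set t := γ 0 1 * δ 1 1 - γ 1 1 * δ 0 1
    rcases eq_or_ne t 0 with ht | ht
    · simp [ht]
    have hta : (t * a).natDegree ≤ n := by
      rw [← hδa, ← hb]
      exact (natDegree_sub_le _ _).trans (max_le hγb hδb)
    have htc : (t * c).natDegree ≤ n := by
      rw [← hδc, ← hd]
      exact (natDegree_sub_le _ _).trans (max_le hγd hδd)
    have := natDegree_add_max_le_of_natDegree_mul_le ht hac hta htc
    omega
  · intro γ hγ γ' hγ' ht
    obtain ⟨hγa, hγc, -, -⟩ := hs γ hγ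
    obtain ⟨hγa', hγc', -, -⟩ := hs γ' hγ'
    obtain ⟨hb, hd⟩ := SL2_col_one_sub_eq_mul_col_zero (hγa.trans hδa.symm) (hγc.trans hδc.symm)
    obtain ⟨hb', hd'⟩ :=
      SL2_col_one_sub_eq_mul_col_zero (hγa'.trans hδa.symm) (hγc'.trans hδc.symm)
    refine Matrix.SpecialLinearGroup.ext _ _ ?_
    simp only [Fin.forall_fin_two]
    refine ⟨⟨hγa.trans hγa'.symm, ?_⟩, hγc.trans hγc'.symm, ?_⟩
    · linear_combination hb - hb' + δ 0 0 * ht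
    · linear_combination hd - hd' + δ 1 0 * ht

theorem sum_pow_sub_max_natDegree_le {n1 n2 : ℕ} (h : n1 ≤ n2) :
    ∑ p ∈ natDegreeLEFinset Fq n1 ×ˢ natDegreeLEFinset Fq n1,
      q ^ (n2 - max p.1.natDegree p.2.natDegree + 1) ≤ q ^ (n1 + n2 + 4) := by
  have hmaps : ∀ p ∈ natDegreeLEFinset Fq n1 ×ˢ natDegreeLEFinset Fq n1,
      max p.1.natDegree p.2.natDegree ∈ Finset.range (n1 + 1) := by
    simp [mem_natDegreeLEFinset]
  rw [← Finset.sum_fiberwise_of_maps_to hmaps]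
  calc _ ≤ ∑ k ∈ Finset.range (n1 + 1), q ^ (k + 1) * q ^ (k + 1) * q ^ (n2 - k + 1) := by
        refine Finset.sum_le_sum fun k _ => ?_
        calc _ = #{p ∈ natDegreeLEFinset Fq n1 ×ˢ natDegreeLEFinset Fq n1 |
                max p.1.natDegree p.2.natDegree = k} * q ^ (n2 - k + 1) := by
              rw [Finset.sum_congr rfl fun p hp => by rw [(Finset.mem_filter.mp hp).2],
                Finset.sum_const, smul_eq_mul]
          _ ≤ #(natDegreeLEFinset Fq k ×ˢ natDegreeLEFinset Fq k) * q ^ (n2 - k + 1) := by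
              refine Nat.mul_le_mul_right _ (Finset.card_le_card fun p hp => ?_)
              simp only [Finset.mem_filter, Finset.mem_product, mem_natDegreeLEFinset] at hp ⊢
              omega
          _ = _ := by rw [Finset.card_product, card_natDegreeLEFinset]
    _ = ∑ k ∈ Finset.range (n1 + 1), q ^ (n2 + 3) * q ^ k := by
        refine Finset.sum_congr rfl fun k hk => ?_
        rw [← pow_add, ← pow_add, ← pow_add]
        congr 1
        have := Finset.mem_range.mp hk
        omega
    _ ≤ q ^ (n2 + 3) * q ^ (n1 + 1) := by
        rw [← Finset.mul_sum]
        gcongr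
        exact (Nat.geomSum_lt Fintype.one_lt_card fun k hk => Finset.mem_range.mp hk).le
    _ = q ^ (n1 + n2 + 4) := by ring

theorem ncard_natDegreeBddSL2_le_of_le {n1 n2 : ℕ} (h : n1 ≤ n2) :
    (natDegreeBddSL2 Fq n1 n2).ncard ≤ q ^ (n1 + n2 + 4) := by
  have hcover : natDegreeBddSL2 Fq n1 n2 =
      ⋃ p ∈ natDegreeLEFinset Fq n1 ×ˢ natDegreeLEFinset Fq n1,
        {γ ∈ natDegreeBddSL2 Fq n1 n2 | γ 0 0 = p.1 ∧ γ 1 0 = p.2} := by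
    ext γ
    simp only [natDegreeBddSL2, Set.mem_iUnion, Set.mem_ofPred_eq, Finset.mem_product,
      mem_natDegreeLEFinset, exists_prop, Prod.exists]
    exact ⟨fun h => ⟨_, _, ⟨h.1, h.2.1⟩, h, rfl, rfl⟩, fun ⟨_, _, _, h, _⟩ => h⟩
  calc _ ≤ ∑ p ∈ natDegreeLEFinset Fq n1 ×ˢ natDegreeLEFinset Fq n1,
        {γ ∈ natDegreeBddSL2 Fq n1 n2 | γ 0 0 = p.1 ∧ γ 1 0 = p.2}.ncard :=
        (congrArg Set.ncard hcover).le.trans (Finset.set_ncard_biUnion_le _ _)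
    _ ≤ ∑ p ∈ natDegreeLEFinset Fq n1 ×ˢ natDegreeLEFinset Fq n1,
        q ^ (n2 - max p.1.natDegree p.2.natDegree + 1) := by
        refine Finset.sum_le_sum fun p hp => ncard_le_of_forall_col_zero_eq ?_ ?_
        · rw [Finset.mem_product, mem_natDegreeLEFinset, mem_natDegreeLEFinset] at hp
          omega
        · rintro γ ⟨⟨-, -, hb, hd⟩, ha, hc⟩
          exact ⟨ha, hc, hb, hd⟩
    _ ≤ q ^ (n1 + n2 + 4) := sum_pow_sub_max_natDegree_le h

theorem ncard_natDegreeBddSL2_le (n1 n2 : ℕ) :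
    (natDegreeBddSL2 Fq n1 n2).ncard ≤ q ^ (n1 + n2 + 4) := by
  rcases le_total n1 n2 with h | h
  · exact ncard_natDegreeBddSL2_le_of_le h
  · rw [ncard_natDegreeBddSL2_comm, add_comm n1]
    exact ncard_natDegreeBddSL2_le_of_le h

theorem bddSL2_subset_natDegreeBddSL2 (B1 B2 : ℝ) :
    bddSL2 Fq B1 B2 ⊆ natDegreeBddSL2 Fq (Nat.log q ⌊B1⌋₊) (Nat.log q ⌊B2⌋₊) :=
  fun _ ⟨⟨ha, hc⟩, hb, hd⟩ => ⟨natDegree_le_log_of_labs_polyToL_le ha,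
    natDegree_le_log_of_labs_polyToL_le hc, natDegree_le_log_of_labs_polyToL_le hb,
    natDegree_le_log_of_labs_polyToL_le hd⟩

end

/-- **Counting lattice matrices with bounded columns.** The number of matrices in
`SL₂(𝔽_q[T])` with first column bounded by `B₁` and second column bounded by `B₂`
is `O(B₁ B₂)`, with implied constant depending only on `q`. -/
theorem stmt19 : ∃ c : ℝ, 0 < c ∧ ∀ B1 B2 : ℝ, 1 ≤ B1 → 1 ≤ B2 →
    (bddSL2 Fq B1 B2).Finite ∧
    (Nat.card (bddSL2 Fq B1 B2) : ℝ) ≤ c * B1 * B2 := by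
  set q := Fintype.card Fq
  refine ⟨(q : ℝ) ^ 4, by positivity, fun B1 B2 hB1 hB2 => ?_⟩
  set n1 := Nat.log q ⌊B1⌋₊
  set n2 := Nat.log q ⌊B2⌋₊
  have hsub : bddSL2 Fq B1 B2 ⊆ natDegreeBddSL2 Fq n1 n2 := bddSL2_subset_natDegreeBddSL2 B1 B2
  have hfin := natDegreeBddSL2_finite (R := Fq) n1 n2
  refine ⟨hfin.subset hsub, ?_⟩
  rw [Nat.card_coe_set_eq]
  calc ((bddSL2 Fq B1 B2).ncard : ℝ) ≤ ((q ^ (n1 + n2 + 4) : ℕ) : ℝ) :=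
        mod_cast (Set.ncard_le_ncard hsub hfin).trans (ncard_natDegreeBddSL2_le n1 n2)
    _ = q ^ 4 * q ^ n1 * q ^ n2 := by push_cast; ring
    _ ≤ q ^ 4 * B1 * B2 := by
        gcongr
        · exact_mod_cast pow_log_floor_le hB1
        · exact_mod_cast pow_log_floor_le hB2
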